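/- arXiv:1910.07399 — 2 statements merged into one kernel-verified Lean document; each statement's English description precedes it below -/
import Mathlib

section
/- The Thue-Morse subshift Ω is aperiodic: the shift action of ℤ on Ω is free, i.e. if w ∈ Ω and σⁿ(w) = w for some n ∈ ℤ, then n = 0. -/
open Fin.NatCast in
/-- Thue-Morse sequence: parity of number of 1s in binary expansion. -/
def tm (n : ℕ) : Fin 2 := ((Nat.digits 2 n).count 1 : Fin 2)

/-- Thue-Morse substitution on letters. -/
def zetaWord (a : Fin 2) : List (Fin 2) := [a, 1 - a]

/-- Thue-Morse substitution on words. -/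
def zetaL (w : List (Fin 2)) : List (Fin 2) := w.flatMap zetaWord

/-- Shift on bi-infinite sequences. -/
def shiftZ (w : ℤ → Fin 2) : ℤ → Fin 2 := fun n => w (n + 1)

/-- ζ on bi-infinite sequences: ζ(w)(2n)=w(n), ζ(w)(2n+1)=1-w(n). -/
def zetaZ (w : ℤ → Fin 2) : ℤ → Fin 2 :=
  fun n => if n % 2 = 0 then w (n / 2) else 1 - w (n / 2)

/-- `v` occurs as a factor of the bi-infinite word `w`. -/
def IsFactorZ (v : List (Fin 2)) (w : ℤ → Fin 2) : Prop :=
  ∃ i : ℤ, ∀ k : ℕ, k < v.length → w (i + k) = v.getD k 0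

/-- The Thue-Morse subshift: bi-infinite words all of whose factors occur in some ζⁿ(0). -/
def Omega : Set (ℤ → Fin 2) :=
  {w | ∀ v : List (Fin 2), IsFactorZ v w → ∃ n : ℕ, v <:+: zetaL^[n] [0]}

/-! If `w ∈ Ω` has period `p ≥ 1`, every factor of `w` occurs in the Thue–Morse word
`t = ζ^∞(0)`, so `t` has arbitrarily long factors of period `p`. Since `t (2n) = t n`, an even
period `2q` of such factors halves to `q`. For an odd period `2r + 1`, comparing positions `2n`
and `2n + 1` with their translates gives `t (n + r) = t (n + r + 1)` for two consecutive `n`, so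
`t` would contain `aaa`; but `t (2a + 1) ≠ t (2a)`. -/

lemma tm_two_mul (n : ℕ) : tm (2 * n) = tm n := by
  rcases Nat.eq_zero_or_pos n with rfl | hn
  · rfl
  · simp [tm, Nat.digits_def' (b := 2) (by norm_num) (by omega : 0 < 2 * n)]

open Fin.NatCast in
lemma tm_two_mul_add_one (n : ℕ) : tm (2 * n + 1) = 1 - tm n := by
  simp only [tm, Nat.digits_def' (b := 2) (by norm_num) (by omega : 0 < 2 * n + 1)]
  rw [show (2 * n + 1) % 2 = 1 by omega, show (2 * n + 1) / 2 = n by omega, List.count_cons_self]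
  push_cast
  generalize ((Nat.digits 2 n).count 1 : Fin 2) = x
  revert x; decide

lemma tm_succ_ne_of_even {m : ℕ} (hm : Even m) : tm (m + 1) ≠ tm m := by
  obtain ⟨a, rfl⟩ := hm
  rw [← two_mul, tm_two_mul_add_one, tm_two_mul]
  generalize tm a = x
  revert x; decide

theorem List.IsInfix.exists_map_range {α : Type*} {f g : ℕ → α} {n M : ℕ}
    (h : (List.range n).map f <:+: (List.range M).map g) : ∃ j, ∀ k < n, f k = g (j + k) := by
  obtain ⟨s, t, hst⟩ := h
  refine ⟨s.length, fun k hk => ?_⟩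
  have hM : s.length + k < M := by
    have := congrArg List.length hst
    simp only [List.length_append, List.length_map, List.length_range] at this
    omega
  have := congrArg (·[s.length + k]?) hst
  simp only [List.append_assoc] at this
  rw [List.getElem?_append_right (by omega)] at this
  simpa [List.getElem?_append_left, hk, hM] using this

lemma zetaL_append (u v : List (Fin 2)) : zetaL (u ++ v) = zetaL u ++ zetaL v :=
  List.flatMap_append

lemma zetaL_map_tm_range (n : ℕ) :
    zetaL ((List.range n).map tm) = (List.range (2 * n)).map tm := by
  induction n with
  | zero => rfl
  | succ n ih =>
    rw [List.range_succ, List.map_append, zetaL_append, ih, show 2 * (n + 1) = 2 * n + 1 + 1 by ring,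
      List.range_succ, List.range_succ]
    simp [zetaL, zetaWord, tm_two_mul, tm_two_mul_add_one]

lemma zetaL_iterate_zero (m : ℕ) : zetaL^[m] [0] = (List.range (2 ^ m)).map tm := by
  induction m with
  | zero => rfl
  | succ m ih => rw [Function.iterate_succ_apply', ih, zetaL_map_tm_range, pow_succ, mul_comm]

def HasLongPeriodicTmFactors (p : ℕ) : Prop :=
  ∀ L, ∃ i, ∀ m, i ≤ m → m < i + L → tm (m + p) = tm m

lemma HasLongPeriodicTmFactors.of_two_mul {q : ℕ} (h : HasLongPeriodicTmFactors (2 * q)) :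
    HasLongPeriodicTmFactors q := by
  intro L
  obtain ⟨i, hi⟩ := h (2 * L + 1)
  refine ⟨(i + 1) / 2, fun m hm hmL => ?_⟩
  have := hi (2 * m) (by omega) (by omega)
  rwa [← mul_add, tm_two_mul, tm_two_mul] at this

lemma not_hasLongPeriodicTmFactors_of_odd {p : ℕ} (hp : Odd p) : ¬ HasLongPeriodicTmFactors p := by
  obtain ⟨r, rfl⟩ := hp
  intro h
  obtain ⟨i, hi⟩ := h 6
  have square : ∀ n, i ≤ 2 * n → 2 * n + 1 < i + 6 → tm (n + r + 1) = tm (n + r) := by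
    intro n h₁ h₂
    have even := hi (2 * n) h₁ (by omega)
    have odd := hi (2 * n + 1) (by omega) h₂
    rw [show 2 * n + (2 * r + 1) = 2 * (n + r) + 1 by ring, tm_two_mul_add_one, tm_two_mul] at even
    rw [show 2 * n + 1 + (2 * r + 1) = 2 * (n + r + 1) by ring, tm_two_mul, tm_two_mul_add_one,
      ← even, sub_sub_cancel] at odd
    exact odd
  -- positions `2n, …, 2n + 3` lie in the window `[i, i + 6)`
  set n := i / 2 + 1
  have h₀ := square n (by omega) (by omega)
  have h₁ := square (n + 1) (by omega) (by omega)
  rw [add_right_comm n 1 r] at h₁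
  rcases Nat.even_or_odd (n + r) with he | ho
  · exact tm_succ_ne_of_even he h₀
  · exact tm_succ_ne_of_even ho.add_one h₁

lemma not_hasLongPeriodicTmFactors {p : ℕ} (hp : 0 < p) : ¬ HasLongPeriodicTmFactors p := by
  induction p using Nat.strong_induction_on with
  | _ p ih =>
    rcases Nat.even_or_odd' p with ⟨q, rfl | rfl⟩
    · exact fun h => ih q (by omega) (by omega) h.of_two_mul
    · exact not_hasLongPeriodicTmFactors_of_odd (odd_two_mul_add_one q)

lemma hasLongPeriodicTmFactors_of_mem_omega {w : ℤ → Fin 2} {p : ℕ} (hw : w ∈ Omega)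
    (hp : Function.Periodic w p) : HasLongPeriodicTmFactors p := by
  intro L
  set v := (List.range (L + p)).map (fun k : ℕ => w k)
  have hv : IsFactorZ v w := ⟨0, fun k hk => by simp_all [v]⟩
  obtain ⟨n, hn⟩ := hw v hv
  rw [zetaL_iterate_zero] at hn
  obtain ⟨j, hj⟩ := hn.exists_map_range
  refine ⟨j, fun m hjm hmL => ?_⟩
  obtain ⟨k, rfl⟩ := Nat.exists_eq_add_of_le hjm
  calc tm (j + k + p) = w ↑(k + p) := by rw [hj _ (by omega), add_assoc]
    _ = w k := by rw [Nat.cast_add, hp]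
    _ = tm (j + k) := hj k (by omega)

theorem thue_morse_subshift_aperiodic :
    ∀ w ∈ Omega, ∀ n : ℤ, (∀ k : ℤ, w (k + n) = w k) → n = 0 := by
  intro w hw n hn
  have hper : Function.Periodic w n.natAbs := by
    rcases Int.natAbs_eq n with h | h
    · rwa [← h]
    · rw [← neg_eq_iff_eq_neg.mpr h]; exact Function.Periodic.neg hn
  by_contra h
  exact not_hasLongPeriodicTmFactors (Int.natAbs_pos.mpr h)
    (hasLongPeriodicTmFactors_of_mem_omega hw hper)
end

section
/- The Thue-Morse subshift is minimal: for every w ∈ Ω, the orbit {σⁿ(w) : n ∈ ℤ} is dense in Ω. -/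
/-!
Every factor of an element of `Omega` lies in some `ζᵐ(0)`. Since `ζᵖ(0) = ζᵐ⁺¹(ζᵖ⁻ᵐ⁻¹(0))` is a
concatenation of blocks `ζᵐ⁺¹(c) = ζᵐ(c) ζᵐ(1 - c)` of length `2ᵐ⁺¹`, each containing `ζᵐ(0)`,
every factor of length `2ᵐ⁺²` of some `ζᵖ(0)` contains a whole block and hence `ζᵐ(0)`. So every
factor of `w' ∈ Omega` occurs in every `w ∈ Omega`; in particular each central window of `w'` is a
window of a shift of `w`, which is density of the orbit in the product topology.
-/

theorem List.exists_infix_of_infix_flatMap {α β : Type*} {f : α → List β} {L : ℕ} (hL : 0 < L)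
    (hf : ∀ a, (f a).length = L) {u : List α} {v : List β} (hv : v <:+: u.flatMap f)
    (hlen : 2 * L ≤ v.length) : ∃ a ∈ u, f a <:+: v := by
  induction u with
  | nil =>
    obtain rfl : v = [] := by simpa using hv
    simp only [List.length_nil] at hlen
    omega
  | cons a u ih =>
    obtain ⟨s, t, hst⟩ := hv
    have hdrop : u.flatMap f = (s ++ (v ++ t)).drop L := by
      rw [← List.append_assoc, hst, List.flatMap_cons, List.drop_left' (hf a)]
    -- Either `v` starts past the first block, or it starts inside it and covers the second block.
    by_cases hs : L ≤ s.length
    · have hvR : v <:+: u.flatMap f :=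
        ⟨s.drop L, t, by rw [hdrop, List.drop_append_of_le_length hs, List.append_assoc]⟩
      obtain ⟨b, hb, hbv⟩ := ih hvR
      exact ⟨b, List.mem_cons_of_mem a hb, hbv⟩
    · cases u with
      | nil =>
        have := congrArg List.length hdrop
        simp only [List.flatMap_nil, List.length_nil, List.length_drop, List.length_append] at this
        omega
      | cons b u =>
        have hR : f b ++ u.flatMap f = v.drop (L - s.length) ++ t := by
          rw [← List.flatMap_cons, hdrop, List.drop_append, List.drop_eq_nil_of_le (by omega),
            List.nil_append, List.drop_append_of_le_length (by omega)]
        have hpre : f b <+: v.drop (L - s.length) :=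
          List.prefix_of_prefix_length_le (List.prefix_append _ _)
            (hR ▸ List.prefix_append (v.drop _) t) (by simp only [hf, List.length_drop]; omega)
        exact ⟨b, by simp, hpre.isInfix.trans (List.drop_suffix _ _).isInfix⟩

theorem zetaL_iterate_eq_flatMap (n : ℕ) (u : List (Fin 2)) :
    zetaL^[n] u = u.flatMap fun c => zetaL^[n] [c] := by
  induction n generalizing u with
  | zero => simp
  | succ n ih =>
    rw [Function.iterate_succ_apply, ih, zetaL, List.flatMap_assoc]
    refine List.flatMap_congr fun c _ => ?_
    rw [Function.iterate_succ_apply, ih]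
    simp [zetaL]

theorem length_zetaL_iterate_singleton (n : ℕ) (a : Fin 2) : (zetaL^[n] [a]).length = 2 ^ n := by
  induction n generalizing a with
  | zero => rfl
  | succ n ih =>
    rw [Function.iterate_succ_apply, zetaL_iterate_eq_flatMap]
    simp [zetaL, zetaWord, ih, pow_succ, mul_two]

theorem zetaL_iterate_zero_infix_succ (m : ℕ) (c : Fin 2) :
    zetaL^[m] [0] <:+: zetaL^[m + 1] [c] := by
  rw [Function.iterate_succ_apply, zetaL_iterate_eq_flatMap m (zetaL [c])]
  exact List.infix_flatMap_of_mem (by fin_cases c <;> decide) fun c => zetaL^[m] [c]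

theorem zetaL_iterate_zero_infix_of_infix {m p : ℕ} {v : List (Fin 2)}
    (hv : v <:+: zetaL^[p] [0]) (hlen : 2 ^ (m + 2) ≤ v.length) : zetaL^[m] [0] <:+: v := by
  have hmp : m + 1 ≤ p := by
    have := hlen.trans (length_zetaL_iterate_singleton p 0 ▸ hv.length_le)
    have := (Nat.pow_le_pow_iff_right (by norm_num : 1 < 2)).mp this
    omega
  obtain ⟨q, rfl⟩ := Nat.exists_eq_add_of_le hmp
  rw [Function.iterate_add_apply, zetaL_iterate_eq_flatMap (m + 1)] at hv
  obtain ⟨c, -, hc⟩ := List.exists_infix_of_infix_flatMap (by positivity)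
    (length_zetaL_iterate_singleton (m + 1)) hv (by rwa [← pow_succ'])
  exact (zetaL_iterate_zero_infix_succ m c).trans hc

section Window

variable {α : Type*}

def window (w : ℤ → α) (i : ℤ) (n : ℕ) : List α :=
  (List.range n).map fun k : ℕ => w (i + k)

@[simp]
theorem length_window (w : ℤ → α) (i : ℤ) (n : ℕ) : (window w i n).length = n := by
  simp [window]

theorem window_add (w : ℤ → α) (i : ℤ) (m n : ℕ) :
    window w i (m + n) = window w i m ++ window w (i + m) n := by
  simp only [window, List.range_add, List.map_append, List.map_map, Function.comp_def,
    Nat.cast_add, add_assoc]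

theorem window_eq_window_iff {w w' : ℤ → α} {i i' : ℤ} {n : ℕ} :
    window w i n = window w' i' n ↔ ∀ k < n, w (i + k) = w' (i' + k) := by
  simp only [window, List.map_inj_left, List.mem_range]

theorem window_shift (w : ℤ → α) (i d : ℤ) (n : ℕ) :
    window (fun k => w (k + d)) i n = window w (i + d) n := by
  simp [window, add_right_comm]

theorem mem_closure_of_forall_window_eq [TopologicalSpace α] {S : Set (ℤ → α)} {y : ℤ → α}
    (h : ∀ N : ℕ, ∃ x ∈ S, window x (-N) (2 * N + 1) = window y (-N) (2 * N + 1)) :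
    y ∈ closure S := by
  refine mem_closure_iff_nhds.mpr fun U hU => ?_
  rw [nhds_pi, Filter.mem_pi] at hU
  obtain ⟨I, hI, V, hV, hVU⟩ := hU
  obtain ⟨N, hN⟩ := (hI.image Int.natAbs).bddAbove
  obtain ⟨x, hxS, hxy⟩ := h N
  refine ⟨x, hVU fun i hi => ?_, hxS⟩
  have hiN : i.natAbs ≤ N := hN ⟨i, hi, rfl⟩
  have := window_eq_window_iff.mp hxy (i + N).toNat (by omega)
  rw [show -(N : ℤ) + (i + N).toNat = i by omega] at this
  exact this ▸ mem_of_mem_nhds (hV i)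

end Window

theorem isFactorZ_iff_exists_window_eq {v : List (Fin 2)} {w : ℤ → Fin 2} :
    IsFactorZ v w ↔ ∃ i, window w i v.length = v := by
  refine exists_congr fun i => ⟨fun h => ?_, fun h k hk => ?_⟩
  · refine List.ext_getElem (length_window ..) fun k _ hk => ?_
    simp only [window, List.getElem_map, List.getElem_range, h k hk, List.getD_eq_getElem _ _ hk]
  · rw [List.getD_eq_getElem _ _ hk, ← List.getElem_of_eq h (by simpa using hk)]
    simp only [window, List.getElem_map, List.getElem_range]

theorem isFactorZ_window (w : ℤ → Fin 2) (i : ℤ) (n : ℕ) : IsFactorZ (window w i n) w :=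
  isFactorZ_iff_exists_window_eq.mpr ⟨i, by simp⟩

theorem IsFactorZ.of_infix {u v : List (Fin 2)} {w : ℤ → Fin 2} (hu : IsFactorZ u w)
    (hvu : v <:+: u) : IsFactorZ v w := by
  obtain ⟨s, t, rfl⟩ := hvu
  obtain ⟨i, hi⟩ := isFactorZ_iff_exists_window_eq.mp hu
  rw [List.length_append, List.length_append, window_add, window_add] at hi
  obtain ⟨hsv, -⟩ := List.append_inj hi (by simp)
  exact isFactorZ_iff_exists_window_eq.mpr ⟨_, (List.append_inj hsv (by simp)).2⟩

theorem isFactorZ_of_mem_Omega {v : List (Fin 2)} {w w' : ℤ → Fin 2} (hw : w ∈ Omega)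
    (hw' : w' ∈ Omega) (hv : IsFactorZ v w') : IsFactorZ v w := by
  obtain ⟨m, hm⟩ := hw' v hv
  obtain ⟨p, hp⟩ := hw _ (isFactorZ_window w 0 (2 ^ (m + 2)))
  exact (isFactorZ_window w 0 _).of_infix <|
    hm.trans (zetaL_iterate_zero_infix_of_infix hp (length_window ..).ge)

theorem thue_morse_subshift_minimal :
    ∀ w ∈ Omega, ∀ w' ∈ Omega,
      w' ∈ closure {x : ℤ → Fin 2 | ∃ n : ℤ, x = fun k => w (k + n)} := by
  intro w hw w' hw'
  refine mem_closure_of_forall_window_eq fun N => ?_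
  obtain ⟨i, hi⟩ := isFactorZ_iff_exists_window_eq.mp <|
    isFactorZ_of_mem_Omega hw hw' (isFactorZ_window w' (-N) (2 * N + 1))
  refine ⟨_, ⟨i + N, rfl⟩, ?_⟩
  rw [window_shift, ← hi, length_window, neg_add_cancel_comm_assoc]
end
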